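/- arXiv:2106.00715 — 2 statements merged into one kernel-verified Lean document; each statement's English description precedes it below -/
import Mathlib

section
/- Let u, v, w ∈ ℂ with |u| ≠ |v|, and let 𝒳(t) = u e^{it} + v e^{-it} + w. Then the winding number of the closed curve 𝒳 (for t ∈ [0, 2π]) around the point w equals sign(|u|² − |v|²), i.e., (1/2πi) ∮ 𝒳′(t)/(𝒳(t) − w) dt = 1 if |u| > |v| and −1 if |u| < |v|. -/
/-!
Writing `q(t) = (b/a) e^{-2ct}`, the logarithmic derivative of `a e^{ct} + b e^{-ct}` is
`c (1 - q)/(1 + q)`, which is the derivative of `c t + log (1 + q(t))`. When `c` is purely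
imaginary and `‖b‖ < ‖a‖` we have `‖q‖ < 1`, so `1 + q` stays in the slit plane where the
principal logarithm is holomorphic; if moreover `q` has period `T`, the integral over `[0, T]`
is `c T`. For `|u| > |v|` take `c = i`; for `|u| < |v|` swap `u` and `v` and take `c = -i`.
-/

open Complex Real

namespace Complex

variable {a b c : ℂ}

lemma hasDerivAt_cexp_mul_ofReal (c : ℂ) (t : ℝ) :
    HasDerivAt (fun t : ℝ => exp (c * t)) (c * exp (c * t)) t := by
  simpa [mul_comm] using ((ofRealCLM.hasDerivAt (x := t)).const_mul c).cexp

lemma norm_cexp_mul_ofReal (hc : c.re = 0) (t : ℝ) : ‖exp (c * t)‖ = 1 := by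
  simp [norm_exp, hc]

lemma add_mul_cexp_mem_slitPlane (hc : c.re = 0) (h : ‖b‖ < ‖a‖) (t : ℝ) :
    1 + b / a * exp (-(2 * c) * t) ∈ slitPlane := by
  refine mem_slitPlane_of_norm_lt_one ?_
  rw [norm_mul, norm_cexp_mul_ofReal (by simp [hc]), mul_one, norm_div,
    div_lt_one ((norm_nonneg b).trans_lt h)]
  exact h

lemma mul_cexp_add_mul_cexp_ne_zero (hc : c.re = 0) (h : ‖b‖ < ‖a‖) (t : ℝ) :
    a * exp (c * t) + b * exp (-(c * t)) ≠ 0 := by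
  intro h0
  have := congrArg (‖·‖) (eq_neg_of_add_eq_zero_left h0)
  simp only [norm_neg, norm_mul, norm_cexp_mul_ofReal hc, ← neg_mul,
    norm_cexp_mul_ofReal (c := -c) (by simp [hc]), mul_one] at this
  exact h.ne' this

lemma hasDerivAt_mul_ofReal_add_log_one_add (hc : c.re = 0) (h : ‖b‖ < ‖a‖) (t : ℝ) :
    HasDerivAt (fun t : ℝ => c * t + log (1 + b / a * exp (-(2 * c) * t)))
      ((c * a * exp (c * t) - c * b * exp (-(c * t))) /
        (a * exp (c * t) + b * exp (-(c * t)))) t := by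
  have hq := ((hasDerivAt_cexp_mul_ofReal (-(2 * c)) t).const_mul (b / a)).const_add 1
  have hlog := (hasDerivAt_log (add_mul_cexp_mem_slitPlane hc h t)).comp t hq
  have hct : HasDerivAt (fun t : ℝ => c * t) c t := by
    simpa using (ofRealCLM.hasDerivAt (x := t)).const_mul c
  refine (hct.add hlog).congr_deriv ?_
  have ha : a ≠ 0 := norm_pos_iff.mp ((norm_nonneg b).trans_lt h)
  have hden := mul_cexp_add_mul_cexp_ne_zero hc h t
  have hexp : exp (-(2 * c) * t) = (exp (c * t))⁻¹ ^ 2 := by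
    rw [← exp_neg, ← exp_nat_mul]; congr 1; push_cast; ring
  rw [hexp]
  rw [exp_neg] at hden ⊢
  have hden' : a * exp (c * t) ^ 2 + b ≠ 0 := by
    contrapose! hden
    field_simp
    linear_combination hden
  field_simp
  ring

theorem integral_logDeriv_mul_cexp_add_mul_cexp {T : ℝ} (hc : c.re = 0)
    (hT : exp (2 * c * T) = 1) (h : ‖b‖ < ‖a‖) :
    ∫ t in (0 : ℝ)..T, (c * a * exp (c * t) - c * b * exp (-(c * t))) /
        (a * exp (c * t) + b * exp (-(c * t))) = c * T := by
  have hcont : Continuous fun t : ℝ => (c * a * exp (c * t) - c * b * exp (-(c * t))) /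
      (a * exp (c * t) + b * exp (-(c * t))) :=
    by fun_prop (disch := exact mul_cexp_add_mul_cexp_ne_zero hc h)
  rw [intervalIntegral.integral_eq_sub_of_hasDerivAt
    (fun t _ => hasDerivAt_mul_ofReal_add_log_one_add hc h t) (hcont.intervalIntegrable _ _)]
  simp [exp_neg, hT]

end Complex

/-- Winding number of `𝒳(t) = u e^{it} + v e^{-it} + w` around `w` over
`t ∈ [0, 2π]` equals `sign(|u|² − |v|²)`: it is `1` if `|u| > |v|` and `−1`
if `|u| < |v|`. -/
theorem stmt3 (u v w : ℂ) (huv : ‖u‖ ≠ ‖v‖)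
    (X : ℝ → ℂ)
    (hX : ∀ t : ℝ, X t = u * Complex.exp (Complex.I * t) + v * Complex.exp (-(Complex.I * t)) + w) :
    (1 / (2 * Real.pi * Complex.I)) *
        ∫ t in (0:ℝ)..(2 * Real.pi),
          (Complex.I * u * Complex.exp (Complex.I * t)
              - Complex.I * v * Complex.exp (-(Complex.I * t))) / (X t - w)
      = if ‖v‖ < ‖u‖ then 1 else -1 := by
  have hXw : ∀ t : ℝ, X t - w = u * exp (I * t) + v * exp (-(I * t)) := fun t => by
    rw [hX t]; ring
  have hI : exp (2 * I * (2 * π : ℝ)) = 1 := by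
    rw [show 2 * I * ((2 * π : ℝ) : ℂ) = (2 : ℕ) * (2 * π * I) by push_cast; ring]
    exact exp_nat_mul_two_pi_mul_I 2
  have hnegI : exp (2 * -I * (2 * π : ℝ)) = 1 := by
    rw [mul_neg, neg_mul, Complex.exp_neg, hI, inv_one]
  simp only [hXw]
  rcases huv.lt_or_gt with h | h
  · have key := integral_logDeriv_mul_cexp_add_mul_cexp (by simp) hnegI h
    simp only [neg_mul, neg_neg, neg_sub_neg, add_comm (v * _) (u * _)] at key
    rw [if_neg h.not_gt, key]
    push_cast
    field_simp
  · rw [if_pos h, integral_logDeriv_mul_cexp_add_mul_cexp (by simp) hI h]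
    push_cast
    field_simp
end

section
/- For any triangle with incenter X₁, barycenter X₂, circumcenter X₃, and Mittenpunkt X₉, and with ρ = r/R the ratio of inradius to circumradius, one has X₁ = α X₂ + β X₃ + γ X₉ where α = 6/(ρ+2), β = 2ρ/(ρ+2), γ = −(ρ+4)/(ρ+2). Note α + β + γ = 1, so this is an affine combination. -/
/-!
Put the triangle in `ℂ` with `u = B - A`, `v = C - A` and `Δ = Im (u * conj v)`, twice the signed
area. The conditions `‖O - A‖ = ‖O - B‖ = ‖O - C‖` are linear in `O`, namely
`2 Re ((O - A) * conj u) = c²` and `2 Re ((O - A) * conj v) = b²`, and Cramer's rule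
`I * Δ * z = Re (z * conj v) * u - Re (z * conj u) * v` solves them: this gives both the
barycentric coordinates `a²(b² + c² - a²) : …` of the circumcenter and `2 |Δ| R = a b c`.
Together with Heron's formula `4 Δ² = (a + b + c)(b + c - a)(c + a - b)(a + b - c)` and
`r = |Δ| / (a + b + c)` this yields `ρ = (b + c - a)(c + a - b)(a + b - c) / (2 a b c)`, and the
claimed identity becomes an identity between rational functions of `a`, `b`, `c`.
-/

open Complex ComplexConjugate

namespace Complex

lemma two_mul_re_mul_conj_of_norm_eq_norm_sub {z u : ℂ} (h : ‖z‖ = ‖z - u‖) :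
    2 * (z * conj u).re = ‖u‖ ^ 2 := by
  have := normSq_sub z u
  rw [← Complex.sq_norm, ← Complex.sq_norm, ← Complex.sq_norm, ← h] at this
  linarith

lemma I_mul_im_mul_conj_mul (z u v : ℂ) :
    I * (u * conj v).im * z = (z * conj v).re * u - (z * conj u).re * v := by
  apply Complex.ext <;> simp <;> ring

lemma re_mul_conj_sq_add_im_mul_conj_sq (u v : ℂ) :
    (u * conj v).re ^ 2 + (u * conj v).im ^ 2 = ‖u‖ ^ 2 * ‖v‖ ^ 2 := by
  rw [Complex.sq_norm, Complex.sq_norm, ← normSq_conj v, ← normSq_mul, normSq_apply]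
  ring

lemma two_mul_abs_im_mul_conj_mul_norm {z u v : ℂ} (hu : ‖z‖ = ‖z - u‖)
    (hv : ‖z‖ = ‖z - v‖) :
    2 * |(u * conj v).im| * ‖z‖ = ‖u‖ * ‖v‖ * ‖u - v‖ := by
  have hu' : ((2 * (z * conj u).re : ℝ) : ℂ) = u * conj u := by
    rw [two_mul_re_mul_conj_of_norm_eq_norm_sub hu, mul_conj, Complex.sq_norm]
  have hv' : ((2 * (z * conj v).re : ℝ) : ℂ) = v * conj v := by
    rw [two_mul_re_mul_conj_of_norm_eq_norm_sub hv, mul_conj, Complex.sq_norm]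
  push_cast at hu' hv'
  -- `‖v‖² u - ‖u‖² v = u v conj (v - u)`, whose norm is `‖u‖ ‖v‖ ‖u - v‖`
  have key : 2 * I * (u * conj v).im * z = -(u * v * conj (u - v)) := by
    rw [map_sub]
    linear_combination 2 * I_mul_im_mul_conj_mul z u v + u * hv' - v * hu'
  simpa only [norm_mul, norm_neg, Complex.norm_ofNat, Complex.norm_I, Complex.norm_real,
    norm_conj, Real.norm_eq_abs, mul_one] using congrArg norm key

end Complex

section Triangle

variable {A B C O : ℂ} {a b c : ℝ}

lemma law_of_cosines (ha : a = ‖B - C‖) (hb : b = ‖C - A‖) (hc : c = ‖A - B‖) :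
    2 * ((B - A) * conj (C - A)).re = b ^ 2 + c ^ 2 - a ^ 2 := by
  have := normSq_sub (B - A) (C - A)
  rw [sub_sub_sub_cancel_right, ← Complex.sq_norm, ← Complex.sq_norm, ← Complex.sq_norm,
    norm_sub_rev B A] at this
  rw [ha, hb, hc]
  linarith

lemma heron (ha : a = ‖B - C‖) (hb : b = ‖C - A‖) (hc : c = ‖A - B‖) :
    4 * ((B - A) * conj (C - A)).im ^ 2 =
      (a + b + c) * (b + c - a) * (c + a - b) * (a + b - c) := by
  have hlag := re_mul_conj_sq_add_im_mul_conj_sq (B - A) (C - A)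
  rw [norm_sub_rev B A, ← hb, ← hc] at hlag
  linear_combination 4 * hlag - (2 * ((B - A) * conj (C - A)).re + b ^ 2 + c ^ 2 - a ^ 2) *
    law_of_cosines ha hb hc

lemma sub_pos_of_im_mul_conj_ne_zero (hnd : ((B - A) * conj (C - A)).im ≠ 0)
    (ha : a = ‖B - C‖) (hb : b = ‖C - A‖) (hc : c = ‖A - B‖) :
    0 < b + c - a ∧ 0 < c + a - b ∧ 0 < a + b - c := by
  have hprod : 0 < (a + b + c) * (b + c - a) * (c + a - b) * (a + b - c) := by
    rw [← heron ha hb hc]; positivity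
  have hA := norm_sub_le_norm_sub_add_norm_sub B A C
  have hB := norm_sub_le_norm_sub_add_norm_sub C B A
  have hC := norm_sub_le_norm_sub_add_norm_sub A C B
  rw [norm_sub_rev B A, norm_sub_rev A C, ← ha, ← hb, ← hc] at hA
  rw [norm_sub_rev C B, norm_sub_rev B A, ← ha, ← hb, ← hc] at hB
  rw [norm_sub_rev A C, norm_sub_rev C B, ← ha, ← hb, ← hc] at hC
  refine ⟨?_, ?_, ?_⟩ <;> refine lt_of_le_of_ne (by linarith) fun h0 => hprod.ne' ?_ <;>
    rw [← h0] <;> ring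

lemma two_mul_abs_im_mul_conj_mul_circumradius (ha : a = ‖B - C‖) (hb : b = ‖C - A‖)
    (hc : c = ‖A - B‖) (hB : ‖O - A‖ = ‖O - B‖) (hC : ‖O - A‖ = ‖O - C‖) :
    2 * |((B - A) * conj (C - A)).im| * ‖O - A‖ = a * b * c := by
  rw [← sub_sub_sub_cancel_right O B A] at hB
  rw [← sub_sub_sub_cancel_right O C A] at hC
  rw [two_mul_abs_im_mul_conj_mul_norm hB hC, sub_sub_sub_cancel_right, ha, hb, hc,
    norm_sub_rev A B]
  ring

lemma inradius_div_circumradius (hnd : ((B - A) * conj (C - A)).im ≠ 0)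
    (ha : a = ‖B - C‖) (hb : b = ‖C - A‖) (hc : c = ‖A - B‖)
    (hB : ‖O - A‖ = ‖O - B‖) (hC : ‖O - A‖ = ‖O - C‖) :
    |((B - A) * conj (C - A)).im| / (a + b + c) / ‖O - A‖ =
      (b + c - a) * (c + a - b) * (a + b - c) / (2 * a * b * c) := by
  obtain ⟨hx, hy, hz⟩ := sub_pos_of_im_mul_conj_ne_zero hnd ha hb hc
  have hR := two_mul_abs_im_mul_conj_mul_circumradius ha hb hc hB hC
  obtain ⟨ha₀, hb₀, hc₀⟩ : 0 < a ∧ 0 < b ∧ 0 < c :=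
    ⟨by linarith, by linarith, by linarith⟩
  have habc : 0 < a * b * c := by positivity
  have hRpos : 0 < ‖O - A‖ := pos_of_mul_pos_right (hR ▸ habc) (by positivity)
  rw [div_div, div_eq_div_iff (by positivity) (by positivity)]
  have h4 := heron ha hb hc
  rw [← sq_abs] at h4
  linear_combination (-2 * |((B - A) * conj (C - A)).im|) * hR + ‖O - A‖ * h4

lemma circumcenter_barycentric (hnd : ((B - A) * conj (C - A)).im ≠ 0)
    (ha : a = ‖B - C‖) (hb : b = ‖C - A‖) (hc : c = ‖A - B‖)
    (hB : ‖O - A‖ = ‖O - B‖) (hC : ‖O - A‖ = ‖O - C‖) :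
    ((a + b + c) * (b + c - a) * (c + a - b) * (a + b - c)) • O =
      (a ^ 2 * (b ^ 2 + c ^ 2 - a ^ 2)) • A + (b ^ 2 * (c ^ 2 + a ^ 2 - b ^ 2)) • B +
        (c ^ 2 * (a ^ 2 + b ^ 2 - c ^ 2)) • C := by
  rw [← sub_sub_sub_cancel_right O B A] at hB
  rw [← sub_sub_sub_cancel_right O C A] at hC
  have hu := two_mul_re_mul_conj_of_norm_eq_norm_sub hB
  have hv := two_mul_re_mul_conj_of_norm_eq_norm_sub hC
  have hlaw := law_of_cosines ha hb hc
  rw [norm_sub_rev B A, ← hc] at hu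
  rw [← hb] at hv
  set S : ℝ := (a + b + c) * (b + c - a) * (c + a - b) * (a + b - c) with hS
  set β : ℝ := b ^ 2 * (c ^ 2 + a ^ 2 - b ^ 2) with hβ
  set γ : ℝ := c ^ 2 * (a ^ 2 + b ^ 2 - c ^ 2) with hγ
  set w : ℂ := S * (O - A) - β * (B - A) - γ * (C - A) with hw
  -- `w` is orthogonal to both sides `B - A`, `C - A`, so Cramer's rule forces `w = 0`
  have hwu : (w * conj (B - A)).re = 0 := by
    have : w * conj (B - A) = S * ((O - A) * conj (B - A)) - β * ((B - A) * conj (B - A)) -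
        γ * conj ((B - A) * conj (C - A)) := by
      simp only [hw, map_mul, conj_conj]; ring
    rw [this, sub_re, sub_re, re_ofReal_mul, re_ofReal_mul, re_ofReal_mul, mul_conj, ofReal_re,
      conj_re, normSq_eq_norm_sq, norm_sub_rev B A, ← hc]
    linear_combination S / 2 * hu - γ / 2 * hlaw
  have hwv : (w * conj (C - A)).re = 0 := by
    have : w * conj (C - A) = S * ((O - A) * conj (C - A)) - β * ((B - A) * conj (C - A)) -
        γ * ((C - A) * conj (C - A)) := by
      simp only [hw]; ring
    rw [this, sub_re, sub_re, re_ofReal_mul, re_ofReal_mul, re_ofReal_mul, mul_conj, ofReal_re,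
      normSq_eq_norm_sq, ← hb]
    linear_combination S / 2 * hv - β / 2 * hlaw
  have hIw := I_mul_im_mul_conj_mul w (B - A) (C - A)
  rw [hwu, hwv, ofReal_zero, zero_mul, zero_mul, sub_zero] at hIw
  have hw0 := (mul_eq_zero.mp hIw).resolve_left (mul_ne_zero I_ne_zero (ofReal_ne_zero.mpr hnd))
  simp only [Complex.real_smul]
  rw [hw] at hw0
  push_cast [hS, hβ, hγ] at hw0 ⊢
  linear_combination hw0

end Triangle

/-- For any nondegenerate triangle, with `ρ = r/R`, the incenter satisfies
`X₁ = (6/(ρ+2)) X₂ + (2ρ/(ρ+2)) X₃ − ((ρ+4)/(ρ+2)) X₉`, an affine combination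
of the barycenter, circumcenter, and Mittenpunkt. -/
theorem stmt7 (A B C X₃ : ℂ) (a b c r R ρ : ℝ)
    (ha : a = ‖B - C‖) (hb : b = ‖C - A‖)
    (hc : c = ‖A - B‖)
    (hnd : ((B - A) * (starRingEnd ℂ) (C - A)).im ≠ 0)
    (hRA : ‖X₃ - A‖ = R) (hRB : ‖X₃ - B‖ = R)
    (hRC : ‖X₃ - C‖ = R)
    (hr : r = |((B - A) * (starRingEnd ℂ) (C - A)).im| / (a + b + c))
    (hρ : ρ = r / R)
    (X₁ X₂ X₉ : ℂ)
    (hX₁ : X₁ = (a / (a + b + c)) • A + (b / (a + b + c)) • B + (c / (a + b + c)) • C)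
    (hX₂ : X₂ = (A + B + C) / 3)
    (hX₉ : X₉ = ((a * (b + c - a)) • A + (b * (c + a - b)) • B + (c * (a + b - c)) • C)
        / ((a * (b + c - a) + b * (c + a - b) + c * (a + b - c) : ℝ) : ℂ)) :
    X₁ = (6 / (ρ + 2)) • X₂ + (2 * ρ / (ρ + 2)) • X₃ + (-(ρ + 4) / (ρ + 2)) • X₉ := by
  have hB : ‖X₃ - A‖ = ‖X₃ - B‖ := hRA.trans hRB.symm
  have hC : ‖X₃ - A‖ = ‖X₃ - C‖ := hRA.trans hRC.symm
  obtain ⟨hx, hy, hz⟩ := sub_pos_of_im_mul_conj_ne_zero hnd ha hb hc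
  obtain ⟨ha₀, hb₀, hc₀⟩ : 0 < a ∧ 0 < b ∧ 0 < c :=
    ⟨by linarith, by linarith, by linarith⟩
  have hρ' : ρ = (b + c - a) * (c + a - b) * (a + b - c) / (2 * a * b * c) := by
    rw [hρ, hr, ← hRA, inradius_div_circumradius hnd ha hb hc hB hC]
  have hX₃ := circumcenter_barycentric hnd ha hb hc hB hC
  rw [← eq_inv_smul_iff₀ (by positivity)] at hX₃
  have hX₂' : X₂ = (3 : ℝ)⁻¹ • (A + B + C) := by
    rw [hX₂, real_smul]; push_cast; ring
  have hX₉' : X₉ = (a * (b + c - a) + b * (c + a - b) + c * (a + b - c))⁻¹ •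
      ((a * (b + c - a)) • A + (b * (c + a - b)) • B + (c * (a + b - c)) • C) := by
    rw [hX₉, div_eq_inv_mul, ← ofReal_inv, ← real_smul]
  have hQ : 0 < a * (b + c - a) + b * (c + a - b) + c * (a + b - c) := by positivity
  rw [hX₁, hX₂', hX₉', hX₃, hρ']
  match_scalars <;> field_simp <;> ring
end
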